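/- arXiv:2403.18724 — 3 statements merged into one kernel-verified Lean document; each statement's English description precedes it below -/
import Mathlib

section
/- Let w = (w_x, w_y) be a vertex-based vector field whose discrete curl vanishes at every cell, i.e. (∇^h × w)_{p,q} = 0 for all (p,q) ∈ ℤ×ℤ. Then for any cell-centered scalar field g : ℤ×ℤ → ℝ and any time step Δt ∈ ℝ, the updated vertex-based field w' = w − Δt · ∇^h g also has vanishing discrete curl at every cell: (∇^h × w')_{p,q} = 0 for all (p,q). In particular, the staggered update of the relative velocity in which the gradient terms are discretized with the compatible discrete gradient preserves the discrete curl-free constraint exactly for all time steps. -/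
/-- x-component of the compatible discrete gradient of a cell-centered scalar field,
evaluated at the vertex (p+1/2, q+1/2). -/
noncomputable def discreteGradX (Δx : ℝ) (φ : ℤ × ℤ → ℝ) (p q : ℤ) : ℝ :=
  (φ (p + 1, q + 1) - φ (p, q + 1) + φ (p + 1, q) - φ (p, q)) / (2 * Δx)

/-- y-component of the compatible discrete gradient of a cell-centered scalar field,
evaluated at the vertex (p+1/2, q+1/2). -/
noncomputable def discreteGradY (Δy : ℝ) (φ : ℤ × ℤ → ℝ) (p q : ℤ) : ℝ :=
  (φ (p + 1, q + 1) - φ (p + 1, q) + φ (p, q + 1) - φ (p, q)) / (2 * Δy)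

/-- Compatible discrete curl of a vertex-based vector field `(wx, wy)` (indexed so that
`(p,q)` refers to the vertex `(p+1/2, q+1/2)`), evaluated at the cell center `(p,q)`. -/
noncomputable def discreteCurl (Δx Δy : ℝ) (wx wy : ℤ × ℤ → ℝ) (p q : ℤ) : ℝ :=
  (wy (p, q) - wy (p - 1, q) + wy (p, q - 1) - wy (p - 1, q - 1)) / (2 * Δx)
  - (wx (p, q) - wx (p, q - 1) + wx (p - 1, q) - wx (p - 1, q - 1)) / (2 * Δy)

/-- The staggered update `w' = w − Δt ∇ʰ g` of a discretely curl-free vertex-based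
vector field is again discretely curl-free, for any cell-centered scalar field `g`
and any time step `Δt`. -/
theorem update_preserves_discrete_curl_free (Δx Δy : ℝ) (hΔx : 0 < Δx) (hΔy : 0 < Δy)
    (wx wy : ℤ × ℤ → ℝ)
    (hcurl : ∀ p q : ℤ, discreteCurl Δx Δy wx wy p q = 0)
    (g : ℤ × ℤ → ℝ) (Δt : ℝ) :
    ∀ p q : ℤ,
      discreteCurl Δx Δy
        (fun v => wx v - Δt * discreteGradX Δx g v.1 v.2)
        (fun v => wy v - Δt * discreteGradY Δy g v.1 v.2) p q = 0 := by
  intro p q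
  have h := hcurl p q
  simp only [discreteCurl, discreteGradX, discreteGradY] at *
  have e1 : p - 1 + 1 = p := by ring
  have e2 : q - 1 + 1 = q := by ring
  rw [e1, e2] at *
  field_simp at *
  linear_combination 2*h
end

section
/- Let U ⊆ ℝ × ℝ³ be open, let w : U → ℝ³ be of class C², let u : U → ℝ³ be of class C¹, and let b : U → ℝ be of class C². Suppose that on U the relative velocity balance law holds componentwise: ∂w_k/∂t + ∂b/∂x_k + Σ_l u_l (∂w_k/∂x_l − ∂w_l/∂x_k) = 0 for k = 1,2,3. Then the spatial curl Ω = ∇×w (curl in the space variables, at each fixed time) satisfies on U the evolution law ∂Ω/∂t + ∇×(Ω × u) = 0. Consequently the curl-free constraint ∇×w = 0 is an involution of the relative velocity equation: the curl of w obeys a homogeneous transport-type law. -/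
/-- Points of space-time `ℝ × ℝ³`. -/
abbrev SpaceTime3 := ℝ × (Fin 3 → ℝ)

/-- Time partial derivative of a scalar function on space-time. -/
noncomputable def dt3 (f : SpaceTime3 → ℝ) (z : SpaceTime3) : ℝ :=
  fderiv ℝ f z (1, 0)

/-- Spatial partial derivative `∂/∂x_k` of a scalar function on space-time. -/
noncomputable def dx3 (k : Fin 3) (f : SpaceTime3 → ℝ) (z : SpaceTime3) : ℝ :=
  fderiv ℝ f z (0, Pi.single k 1)

/-- Spatial curl (at each fixed time) of a vector field on space-time:
`(∇×v)_i = ε_{ijk} ∂v_k/∂x_j`. -/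
noncomputable def spatialCurl3 (v : SpaceTime3 → Fin 3 → ℝ) (z : SpaceTime3) : Fin 3 → ℝ :=
  ![dx3 1 (fun z => v z 2) z - dx3 2 (fun z => v z 1) z,
    dx3 2 (fun z => v z 0) z - dx3 0 (fun z => v z 2) z,
    dx3 0 (fun z => v z 1) z - dx3 1 (fun z => v z 0) z]

/-! ### Auxiliary directional-derivative machinery -/

/-- Directional derivative along an arbitrary vector in space-time. -/
noncomputable def pd3 (v : SpaceTime3) (f : SpaceTime3 → ℝ) (z : SpaceTime3) : ℝ :=
  fderiv ℝ f z v

lemma pd3_sub {f g : SpaceTime3 → ℝ} {z : SpaceTime3} (v : SpaceTime3)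
    (hf : DifferentiableAt ℝ f z) (hg : DifferentiableAt ℝ g z) :
    pd3 v (fun x => f x - g x) z = pd3 v f z - pd3 v g z := by
  unfold pd3
  rw [fderiv_fun_sub hf hg]; rfl

lemma pd3_add {f g : SpaceTime3 → ℝ} {z : SpaceTime3} (v : SpaceTime3)
    (hf : DifferentiableAt ℝ f z) (hg : DifferentiableAt ℝ g z) :
    pd3 v (fun x => f x + g x) z = pd3 v f z + pd3 v g z := by
  unfold pd3
  rw [fderiv_fun_add hf hg]; rfl

lemma pd3_neg {f : SpaceTime3 → ℝ} {z : SpaceTime3} (v : SpaceTime3) :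
    pd3 v (fun x => -f x) z = -pd3 v f z := by
  unfold pd3
  rw [fderiv_fun_neg]; rfl

lemma pd3_mul {f g : SpaceTime3 → ℝ} {z : SpaceTime3} (v : SpaceTime3)
    (hf : DifferentiableAt ℝ f z) (hg : DifferentiableAt ℝ g z) :
    pd3 v (fun x => f x * g x) z = pd3 v f z * g z + f z * pd3 v g z := by
  unfold pd3
  rw [fderiv_fun_mul hf hg]
  simp only [ContinuousLinearMap.add_apply, ContinuousLinearMap.smul_apply, smul_eq_mul]
  ring

lemma pd3_congr {f g : SpaceTime3 → ℝ} {z : SpaceTime3} {U : Set SpaceTime3}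
    (hU : IsOpen U) (hz : z ∈ U) (h : ∀ x ∈ U, f x = g x) (v : SpaceTime3) :
    pd3 v f z = pd3 v g z := by
  unfold pd3
  have : f =ᶠ[nhds z] g := Filter.eventuallyEq_of_mem (hU.mem_nhds hz) h
  rw [this.fderiv_eq]

lemma pd3_swap {f : SpaceTime3 → ℝ} {z : SpaceTime3} (hf : ContDiffAt ℝ 2 f z)
    (v v' : SpaceTime3) :
    pd3 v (fun x => pd3 v' f x) z = pd3 v' (fun x => pd3 v f x) z := by
  have hd : DifferentiableAt ℝ (fderiv ℝ f) z :=
    (hf.fderiv_right (m := 1) le_rfl).differentiableAt one_ne_zero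
  have h1 : ∀ a b : SpaceTime3,
      pd3 a (fun x => pd3 b f x) z = fderiv ℝ (fderiv ℝ f) z a b := by
    intro a b
    unfold pd3
    have h2 : HasFDerivAt (fun x => fderiv ℝ f x b)
        (((ContinuousLinearMap.apply ℝ ℝ b).comp (fderiv ℝ (fderiv ℝ f) z))) z :=
      ((ContinuousLinearMap.apply ℝ ℝ b).hasFDerivAt.comp z hd.hasFDerivAt)
    rw [h2.fderiv]
    rfl
  rw [h1, h1, hf.isSymmSndFDerivAt (by simp [minSmoothness_of_isRCLikeNormedField])]

lemma pd3_diff {f : SpaceTime3 → ℝ} {z : SpaceTime3} (hf : ContDiffAt ℝ 2 f z)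
    (v : SpaceTime3) : DifferentiableAt ℝ (fun x => pd3 v f x) z := by
  have hd : DifferentiableAt ℝ (fderiv ℝ f) z :=
    (hf.fderiv_right (m := 1) le_rfl).differentiableAt one_ne_zero
  exact (ContinuousLinearMap.apply ℝ ℝ v).differentiableAt.comp z hd

/-! ### Specializations to `dt3` and `dx3` -/

lemma dx3_sub {f g : SpaceTime3 → ℝ} {z : SpaceTime3} (a : Fin 3)
    (hf : DifferentiableAt ℝ f z) (hg : DifferentiableAt ℝ g z) :
    dx3 a (fun x => f x - g x) z = dx3 a f z - dx3 a g z := pd3_sub _ hf hg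

lemma dx3_add {f g : SpaceTime3 → ℝ} {z : SpaceTime3} (a : Fin 3)
    (hf : DifferentiableAt ℝ f z) (hg : DifferentiableAt ℝ g z) :
    dx3 a (fun x => f x + g x) z = dx3 a f z + dx3 a g z := pd3_add _ hf hg

lemma dx3_neg {f : SpaceTime3 → ℝ} {z : SpaceTime3} (a : Fin 3) :
    dx3 a (fun x => -f x) z = -dx3 a f z := pd3_neg _

lemma dx3_mul {f g : SpaceTime3 → ℝ} {z : SpaceTime3} (a : Fin 3)
    (hf : DifferentiableAt ℝ f z) (hg : DifferentiableAt ℝ g z) :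
    dx3 a (fun x => f x * g x) z = dx3 a f z * g z + f z * dx3 a g z := pd3_mul _ hf hg

lemma dt3_sub {f g : SpaceTime3 → ℝ} {z : SpaceTime3}
    (hf : DifferentiableAt ℝ f z) (hg : DifferentiableAt ℝ g z) :
    dt3 (fun x => f x - g x) z = dt3 f z - dt3 g z := pd3_sub _ hf hg

lemma dx3_congr {f g : SpaceTime3 → ℝ} {z : SpaceTime3} {U : Set SpaceTime3}
    (hU : IsOpen U) (hz : z ∈ U) (h : ∀ x ∈ U, f x = g x) (a : Fin 3) :
    dx3 a f z = dx3 a g z := pd3_congr hU hz h _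

lemma dt3_dx3_swap {f : SpaceTime3 → ℝ} {z : SpaceTime3} (hf : ContDiffAt ℝ 2 f z)
    (a : Fin 3) : dt3 (fun x => dx3 a f x) z = dx3 a (fun x => dt3 f x) z :=
  pd3_swap hf _ _

lemma dx3_dx3_swap {f : SpaceTime3 → ℝ} {z : SpaceTime3} (hf : ContDiffAt ℝ 2 f z)
    (a c : Fin 3) : dx3 a (fun x => dx3 c f x) z = dx3 c (fun x => dx3 a f x) z :=
  pd3_swap hf _ _

lemma dx3_diffAt {f : SpaceTime3 → ℝ} {z : SpaceTime3} (hf : ContDiffAt ℝ 2 f z)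
    (a : Fin 3) : DifferentiableAt ℝ (fun x => dx3 a f x) z := pd3_diff hf _

/-- The core computation: for any labeling `(i, j, k)` of the three spatial directions,
the `i`-th component of the curl evolution law follows from the (rearranged) PDE. -/
lemma key3 (U : Set SpaceTime3) (hU : IsOpen U)
    (w u : SpaceTime3 → Fin 3 → ℝ) (b : SpaceTime3 → ℝ)
    (hw : ContDiffOn ℝ 2 w U) (hu : ContDiffOn ℝ 1 u U) (hb : ContDiffOn ℝ 2 b U)
    (z : SpaceTime3) (hz : z ∈ U) (i j k : Fin 3)
    (hpde : ∀ x ∈ U, ∀ c : Fin 3,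
      dt3 (fun y => w y c) x = -(dx3 c b x)
        - (u x i * (dx3 i (fun y => w y c) x - dx3 c (fun y => w y i) x)
          + u x j * (dx3 j (fun y => w y c) x - dx3 c (fun y => w y j) x)
          + u x k * (dx3 k (fun y => w y c) x - dx3 c (fun y => w y k) x))) :
    dt3 (fun x => dx3 j (fun y => w y k) x - dx3 k (fun y => w y j) x) z
      + (dx3 j (fun x =>
            (dx3 j (fun y => w y k) x - dx3 k (fun y => w y j) x) * u x j
              - (dx3 k (fun y => w y i) x - dx3 i (fun y => w y k) x) * u x i) z
        - dx3 k (fun x =>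
            (dx3 i (fun y => w y j) x - dx3 j (fun y => w y i) x) * u x i
              - (dx3 j (fun y => w y k) x - dx3 k (fun y => w y j) x) * u x k) z) = 0 := by
  have hnz : U ∈ nhds z := hU.mem_nhds hz
  have hwC : ∀ c : Fin 3, ContDiffAt ℝ 2 (fun x => w x c) z := fun c =>
    contDiffAt_pi.mp (hw.contDiffAt hnz) c
  have hbC : ContDiffAt ℝ 2 b z := hb.contDiffAt hnz
  have huD : ∀ c : Fin 3, DifferentiableAt ℝ (fun x => u x c) z := fun c =>
    (contDiffAt_pi.mp (hu.contDiffAt hnz) c).differentiableAt one_ne_zero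
  have hWd : ∀ a c : Fin 3, DifferentiableAt ℝ (fun x => dx3 a (fun y => w y c) x) z :=
    fun a c => dx3_diffAt (hwC c) a
  have hOd : ∀ p q : Fin 3,
      DifferentiableAt ℝ (fun x => dx3 p (fun y => w y q) x - dx3 q (fun y => w y p) x) z :=
    fun p q => (hWd p q).sub (hWd q p)
  have hbd : ∀ a : Fin 3, DifferentiableAt ℝ (fun x => dx3 a b x) z :=
    fun a => dx3_diffAt hbC a
  -- Step 1: commute ∂_t with the spatial derivatives and substitute the PDE.
  rw [dt3_sub (hWd j k) (hWd k j), dt3_dx3_swap (hwC k) j, dt3_dx3_swap (hwC j) k,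
      dx3_congr hU hz (fun x hx => hpde x hx k) j,
      dx3_congr hU hz (fun x hx => hpde x hx j) k]
  -- Step 2: expand the curl-of-cross-product terms.
  rw [dx3_sub j ((hOd j k).fun_mul (huD j)) ((hOd k i).fun_mul (huD i)),
      dx3_sub k ((hOd i j).fun_mul (huD i)) ((hOd j k).fun_mul (huD k)),
      dx3_mul j (hOd j k) (huD j), dx3_mul j (hOd k i) (huD i),
      dx3_mul k (hOd i j) (huD i), dx3_mul k (hOd j k) (huD k),
      dx3_sub j (hWd j k) (hWd k j), dx3_sub j (hWd k i) (hWd i k),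
      dx3_sub k (hWd i j) (hWd j i), dx3_sub k (hWd j k) (hWd k j)]
  -- Step 3: expand the derivatives of the substituted PDE right-hand side.
  rw [dx3_sub j ((hbd k).fun_neg)
        ((((huD i).fun_mul (hOd i k)).fun_add ((huD j).fun_mul (hOd j k))).fun_add ((huD k).fun_mul (hOd k k))),
      dx3_sub k ((hbd j).fun_neg)
        ((((huD i).fun_mul (hOd i j)).fun_add ((huD j).fun_mul (hOd j j))).fun_add ((huD k).fun_mul (hOd k j))),
      dx3_neg j, dx3_neg k,
      dx3_add j (((huD i).fun_mul (hOd i k)).fun_add ((huD j).fun_mul (hOd j k))) ((huD k).fun_mul (hOd k k)),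
      dx3_add j ((huD i).fun_mul (hOd i k)) ((huD j).fun_mul (hOd j k)),
      dx3_add k (((huD i).fun_mul (hOd i j)).fun_add ((huD j).fun_mul (hOd j j))) ((huD k).fun_mul (hOd k j)),
      dx3_add k ((huD i).fun_mul (hOd i j)) ((huD j).fun_mul (hOd j j)),
      dx3_mul j (huD i) (hOd i k), dx3_mul j (huD j) (hOd j k), dx3_mul j (huD k) (hOd k k),
      dx3_mul k (huD i) (hOd i j), dx3_mul k (huD j) (hOd j j), dx3_mul k (huD k) (hOd k j),
      dx3_sub j (hWd i k) (hWd k i), dx3_sub j (hWd k k) (hWd k k),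
      dx3_sub k (hWd i j) (hWd j i), dx3_sub k (hWd j j) (hWd j j),
      dx3_sub j (hWd j k) (hWd k j), dx3_sub k (hWd k j) (hWd j k)]
  -- Step 4: use the symmetry of second derivatives of `b` and conclude.
  rw [dx3_dx3_swap hbC j k]
  ring

/-- If `w` (of class `C²`), `u` (of class `C¹`) and `b` (of class `C²`) satisfy the
relative velocity balance law `∂_t w_k + ∂_k b + Σ_l u_l (∂_l w_k − ∂_k w_l) = 0` on an
open set `U ⊆ ℝ × ℝ³`, then the spatial curl `Ω = ∇×w` satisfies the homogeneous
evolution law `∂_t Ω + ∇×(Ω × u) = 0` on `U`: the curl-free constraint is an involution. -/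
theorem curl_evolution_3d
    (U : Set SpaceTime3) (hU : IsOpen U)
    (w : SpaceTime3 → Fin 3 → ℝ) (u : SpaceTime3 → Fin 3 → ℝ) (b : SpaceTime3 → ℝ)
    (hw : ContDiffOn ℝ 2 w U) (hu : ContDiffOn ℝ 1 u U) (hb : ContDiffOn ℝ 2 b U)
    (hpde : ∀ z ∈ U, ∀ k : Fin 3,
      dt3 (fun z => w z k) z + dx3 k b z
        + ∑ l : Fin 3, u z l * (dx3 l (fun z => w z k) z - dx3 k (fun z => w z l) z) = 0) :
    ∀ z ∈ U, ∀ i : Fin 3,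
      dt3 (fun z => spatialCurl3 w z i) z
        + spatialCurl3 (fun z => crossProduct (spatialCurl3 w z) (u z)) z i = 0 := by
  intro z hz i
  have hp0 : ∀ x ∈ U, ∀ e : Fin 3,
      dt3 (fun y => w y e) x = -(dx3 e b x)
        - (u x 0 * (dx3 0 (fun y => w y e) x - dx3 e (fun y => w y 0) x)
          + u x 1 * (dx3 1 (fun y => w y e) x - dx3 e (fun y => w y 1) x)
          + u x 2 * (dx3 2 (fun y => w y e) x - dx3 e (fun y => w y 2) x)) := by
    intro x hx e
    have h := hpde x hx e
    rw [Fin.sum_univ_three] at h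
    linarith
  have hp1 : ∀ x ∈ U, ∀ e : Fin 3,
      dt3 (fun y => w y e) x = -(dx3 e b x)
        - (u x 1 * (dx3 1 (fun y => w y e) x - dx3 e (fun y => w y 1) x)
          + u x 2 * (dx3 2 (fun y => w y e) x - dx3 e (fun y => w y 2) x)
          + u x 0 * (dx3 0 (fun y => w y e) x - dx3 e (fun y => w y 0) x)) := by
    intro x hx e
    have h := hpde x hx e
    rw [Fin.sum_univ_three] at h
    linarith
  have hp2 : ∀ x ∈ U, ∀ e : Fin 3,
      dt3 (fun y => w y e) x = -(dx3 e b x)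
        - (u x 2 * (dx3 2 (fun y => w y e) x - dx3 e (fun y => w y 2) x)
          + u x 0 * (dx3 0 (fun y => w y e) x - dx3 e (fun y => w y 0) x)
          + u x 1 * (dx3 1 (fun y => w y e) x - dx3 e (fun y => w y 1) x)) := by
    intro x hx e
    have h := hpde x hx e
    rw [Fin.sum_univ_three] at h
    linarith
  fin_cases i
  · simp only [spatialCurl3, cross_apply, Fin.zero_eta, Fin.mk_one, Fin.isValue,
      Matrix.cons_val_zero, Matrix.cons_val_one, Matrix.head_cons, Matrix.cons_val_two,
      Matrix.tail_cons]
    exact key3 U hU w u b hw hu hb z hz 0 1 2 hp0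
  · simp only [spatialCurl3, cross_apply, Fin.zero_eta, Fin.mk_one, Fin.isValue,
      Matrix.cons_val_zero, Matrix.cons_val_one, Matrix.head_cons, Matrix.cons_val_two,
      Matrix.tail_cons]
    exact key3 U hU w u b hw hu hb z hz 1 2 0 hp1
  · simp only [spatialCurl3, cross_apply, Fin.zero_eta, Fin.mk_one, Fin.isValue,
      Matrix.cons_val_zero, Matrix.cons_val_one, Matrix.head_cons, Matrix.cons_val_two,
      Matrix.tail_cons]
    exact key3 U hU w u b hw hu hb z hz 2 0 1 hp2
end

section
/- Let U ⊆ ℝ × ℝ² be open, let w = (w_1, w_2) : U → ℝ² be of class C², let u = (u_1, u_2) : U → ℝ² be of class C¹, and let b : U → ℝ be of class C². Suppose that on U: ∂w_k/∂t + ∂b/∂x_k + Σ_{l=1}^{2} u_l (∂w_k/∂x_l − ∂w_l/∂x_k) = 0 for k = 1,2. Then the scalar curl ω = ∂w_2/∂x_1 − ∂w_1/∂x_2 satisfies the conservative transport equation ∂ω/∂t + ∂(u_1 ω)/∂x_1 + ∂(u_2 ω)/∂x_2 = 0 on U. In particular, the two-dimensional relative velocity equation propagates the curl of w by a homogeneous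 conservation law. -/
/-- Points of planar space-time `ℝ × ℝ²`. -/
abbrev SpaceTime2 := ℝ × (Fin 2 → ℝ)

/-- Time partial derivative of a scalar function on planar space-time. -/
noncomputable def dt2 (f : SpaceTime2 → ℝ) (z : SpaceTime2) : ℝ :=
  fderiv ℝ f z (1, 0)

/-- Spatial partial derivative `∂/∂x_k` of a scalar function on planar space-time. -/
noncomputable def dx2 (k : Fin 2) (f : SpaceTime2 → ℝ) (z : SpaceTime2) : ℝ :=
  fderiv ℝ f z (0, Pi.single k 1)

/-- Scalar curl `ω = ∂w_2/∂x_1 − ∂w_1/∂x_2` of a planar vector field on space-time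
(taken in the space variables at each fixed time). -/
noncomputable def scalarCurl2 (w : SpaceTime2 → Fin 2 → ℝ) (z : SpaceTime2) : ℝ :=
  dx2 0 (fun z => w z 1) z - dx2 1 (fun z => w z 0) z

/-- Applying a directional derivative of a directional derivative. -/
lemma fderiv_fderiv_apply {f : SpaceTime2 → ℝ} {z : SpaceTime2}
    (hf : DifferentiableAt ℝ (fderiv ℝ f) z) (v v' : SpaceTime2) :
    fderiv ℝ (fun y => fderiv ℝ f y v) z v' = fderiv ℝ (fderiv ℝ f) z v' v := by
  rw [fderiv_clm_apply hf (differentiableAt_const v)]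
  simp

/-- Clairaut: mixed directional derivatives of a `C²` function commute. -/
lemma swap_second {f : SpaceTime2 → ℝ} {z : SpaceTime2}
    (hf : ContDiffAt ℝ 2 f z) (v v' : SpaceTime2) :
    fderiv ℝ (fun y => fderiv ℝ f y v) z v' = fderiv ℝ (fun y => fderiv ℝ f y v') z v := by
  have h2 : ContDiffAt ℝ (1 + 1) f z := by
    exact hf.of_le (by norm_num)
  have hd : DifferentiableAt ℝ (fderiv ℝ f) z :=
    (h2.fderiv_right le_rfl).differentiableAt one_ne_zero
  rw [fderiv_fderiv_apply hd, fderiv_fderiv_apply hd]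
  exact (hf.isSymmSndFDerivAt (by simp)) v' v

/-- If `w` (of class `C²`), `u` (of class `C¹`) and `b` (of class `C²`) satisfy the planar
relative velocity balance law `∂_t w_k + ∂_k b + Σ_l u_l (∂_l w_k − ∂_k w_l) = 0` on an
open set `U ⊆ ℝ × ℝ²`, then the scalar curl `ω = ∂_1 w_2 − ∂_2 w_1` satisfies
the conservative transport equation `∂_t ω + ∂_1(u_1 ω) + ∂_2(u_2 ω) = 0` on `U`. -/
theorem curl_transport_2d
    (U : Set SpaceTime2) (hU : IsOpen U)
    (w : SpaceTime2 → Fin 2 → ℝ) (u : SpaceTime2 → Fin 2 → ℝ) (b : SpaceTime2 → ℝ)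
    (hw : ContDiffOn ℝ 2 w U) (hu : ContDiffOn ℝ 1 u U) (hb : ContDiffOn ℝ 2 b U)
    (hpde : ∀ z ∈ U, ∀ k : Fin 2,
      dt2 (fun z => w z k) z + dx2 k b z
        + ∑ l : Fin 2, u z l * (dx2 l (fun z => w z k) z - dx2 k (fun z => w z l) z) = 0) :
    ∀ z ∈ U,
      dt2 (fun z => scalarCurl2 w z) z
        + dx2 0 (fun z => u z 0 * scalarCurl2 w z) z
        + dx2 1 (fun z => u z 1 * scalarCurl2 w z) z = 0 := by
  intro z hz
  have hmem : U ∈ nhds z := hU.mem_nhds hz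
  set T : SpaceTime2 := ((1 : ℝ), (0 : Fin 2 → ℝ)) with hT
  set X0 : SpaceTime2 := ((0 : ℝ), Pi.single (0 : Fin 2) 1) with hX0
  set X1 : SpaceTime2 := ((0 : ℝ), Pi.single (1 : Fin 2) 1) with hX1
  set w0 : SpaceTime2 → ℝ := fun y => w y 0 with hw0def
  set w1 : SpaceTime2 → ℝ := fun y => w y 1 with hw1def
  set ω : SpaceTime2 → ℝ := fun y => fderiv ℝ w1 y X0 - fderiv ℝ w0 y X1 with hωdef
  -- basic regularity facts
  have hwk : ∀ y ∈ U, ∀ k : Fin 2, ContDiffAt ℝ 2 (fun x => w x k) y := fun y hy k =>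
    contDiffAt_pi.1 (hw.contDiffAt (hU.mem_nhds hy)) k
  have hdw : ∀ (f : SpaceTime2 → ℝ), (∀ y ∈ U, ContDiffAt ℝ 2 f y) →
      ∀ (v : SpaceTime2), ∀ y ∈ U, DifferentiableAt ℝ (fun x => fderiv ℝ f x v) y := by
    intro f hf v y hy
    have h2 : ContDiffAt ℝ (1 + 1) f y := by
      exact (hf y hy).of_le (by norm_num)
    exact (((h2.fderiv_right le_rfl).differentiableAt one_ne_zero).clm_apply
      (differentiableAt_const v))
  have hω : ∀ y ∈ U, DifferentiableAt ℝ ω y := fun y hy =>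
    ((hdw w1 (fun y hy => hwk y hy 1) X0 y hy).sub (hdw w0 (fun y hy => hwk y hy 0) X1 y hy))
  have huk : ∀ y ∈ U, ∀ k : Fin 2, DifferentiableAt ℝ (fun x => u x k) y := fun y hy k =>
    ((contDiffAt_pi.1 (hu.contDiffAt (hU.mem_nhds hy)) k).differentiableAt one_ne_zero)
  have hprod : ∀ y ∈ U, ∀ k : Fin 2, DifferentiableAt ℝ (fun x => u x k * ω x) y :=
    fun y hy k => (huk y hy k).mul (hω y hy)
  have hbz : ContDiffAt ℝ 2 b z := hb.contDiffAt hmem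
  have hdbv : ∀ v : SpaceTime2, DifferentiableAt ℝ (fun x => fderiv ℝ b x v) z :=
    fun v => hdw b (fun y hy => hb.contDiffAt (hU.mem_nhds hy)) v z hz
  -- the PDE componentwise
  have heq0 : ∀ y ∈ U, fderiv ℝ w0 y T = -(fderiv ℝ b y X0) + u y 1 * ω y := by
    intro y hy
    have h := hpde y hy 0
    simp only [Fin.sum_univ_two, dt2, dx2, hw0def, hw1def, hT, hX0, hX1, hωdef] at h ⊢
    linarith
  have heq1 : ∀ y ∈ U, fderiv ℝ w1 y T = -(fderiv ℝ b y X1) - u y 0 * ω y := by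
    intro y hy
    have h := hpde y hy 1
    simp only [Fin.sum_univ_two, dt2, dx2, hw0def, hw1def, hT, hX0, hX1, hωdef] at h ⊢
    linarith
  -- key swap: time derivative of a spatial derivative of wₖ
  have key : ∀ (f : SpaceTime2 → ℝ) (g : SpaceTime2 → ℝ), ContDiffAt ℝ 2 f z →
      (∀ y ∈ U, fderiv ℝ f y T = g y) → ∀ v : SpaceTime2,
      fderiv ℝ (fun y => fderiv ℝ f y v) z T = fderiv ℝ g z v := by
    intro f g hf hfg v
    rw [swap_second hf v T]
    have hev : (fun y => fderiv ℝ f y T) =ᶠ[nhds z] g := by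
      filter_upwards [hmem] with y hy using hfg y hy
    rw [hev.fderiv_eq]
  have A1 : fderiv ℝ (fun y => fderiv ℝ w1 y X0) z T =
      fderiv ℝ (fun y => -(fderiv ℝ b y X1) - u y 0 * ω y) z X0 :=
    key w1 _ (hwk z hz 1) heq1 X0
  have A0 : fderiv ℝ (fun y => fderiv ℝ w0 y X1) z T =
      fderiv ℝ (fun y => -(fderiv ℝ b y X0) + u y 1 * ω y) z X1 :=
    key w0 _ (hwk z hz 0) heq0 X1
  -- expand the right-hand sides
  have B1 : fderiv ℝ (fun y => -(fderiv ℝ b y X1) - u y 0 * ω y) z X0 =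
      -(fderiv ℝ (fun y => fderiv ℝ b y X1) z X0) - fderiv ℝ (fun y => u y 0 * ω y) z X0 := by
    rw [fderiv_fun_sub ((hdbv X1).fun_neg) (hprod z hz 0), fderiv_fun_neg]
    simp
  have B0 : fderiv ℝ (fun y => -(fderiv ℝ b y X0) + u y 1 * ω y) z X1 =
      -(fderiv ℝ (fun y => fderiv ℝ b y X0) z X1) + fderiv ℝ (fun y => u y 1 * ω y) z X1 := by
    rw [fderiv_fun_add ((hdbv X0).fun_neg) (hprod z hz 1), fderiv_fun_neg]
    simp
  have hbsym : fderiv ℝ (fun y => fderiv ℝ b y X1) z X0 =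
      fderiv ℝ (fun y => fderiv ℝ b y X0) z X1 := swap_second hbz X1 X0
  -- derivative of ω in time
  have hωT : fderiv ℝ ω z T =
      fderiv ℝ (fun y => fderiv ℝ w1 y X0) z T - fderiv ℝ (fun y => fderiv ℝ w0 y X1) z T := by
    rw [hωdef, fderiv_fun_sub (hdw w1 (fun y hy => hwk y hy 1) X0 z hz)
      (hdw w0 (fun y hy => hwk y hy 0) X1 z hz)]
    simp
  -- put everything together
  have hgoal : fderiv ℝ ω z T + fderiv ℝ (fun y => u y 0 * ω y) z X0
      + fderiv ℝ (fun y => u y 1 * ω y) z X1 = 0 := by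
    rw [hωT, A1, A0, B1, B0, hbsym]; ring
  -- rewrite the goal in terms of ω
  have hsc : ∀ y, scalarCurl2 w y = ω y := fun y => rfl
  simpa only [dt2, dx2, scalarCurl2, hw0def, hw1def, hωdef, hT, hX0, hX1] using hgoal
end
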